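/- Let 0 < ε < π and set δ = ε²/(5π²). Then for every x ∈ [1,∞)⁶ with xᵢ ≤ 3 for all 2 ≤ i ≤ 6 and x₁ ≤ 1 + δ, one has φ(x) ≥ cos ε. -/
import Mathlib

set_option maxHeartbeats 800000

open Real

lemma phi_aux1 (t a b : ℝ) (ht : 0 ≤ t) (ha : 1 ≤ a) (ha3 : a ≤ 3) (hb : 1 ≤ b) (hb3 : b ≤ 3) :
    2 * (1 + t) * a * b + (1 + t) ^ 2 + a ^ 2 + b ^ 2 - 1 ≤ ((a + b) * (1 + 3 * t)) ^ 2 := by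
  nlinarith [mul_nonneg ht (by nlinarith : (0:ℝ) ≤ (a + b) ^ 2 - 4),
    mul_nonneg ht (by nlinarith : (0:ℝ) ≤ 9 - a * b),
    mul_nonneg (mul_self_nonneg t) (by nlinarith : (0:ℝ) ≤ 9 * (a + b) ^ 2 - 1)]

lemma phi_aux2 (t x2 x3 x4 x5 x6 : ℝ) (ht : 0 ≤ t) (ht5 : t ≤ 1/5)
    (h2 : 1 ≤ x2) (h3 : 1 ≤ x3) (h4 : 1 ≤ x4) (h5 : 1 ≤ x5) (h6 : 1 ≤ x6)
    (b4 : x4 ≤ 3) :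
    (x2 + x6) * (x3 + x5) * (1 - 2 * t) ≤
      x2 * x3 + x5 * x6 + (1 + t) * x2 * x5 + (1 + t) * x3 * x6 - (1 + t) ^ 2 * x4 + x4 := by
  nlinarith [mul_nonneg ht (by nlinarith : (0:ℝ) ≤ (x2 + x6) * (x3 + x5) - 4),
    mul_nonneg ht (mul_nonneg (by linarith : (0:ℝ) ≤ x2 - 1) (by linarith : (0:ℝ) ≤ x5 - 1)),
    mul_nonneg ht (mul_nonneg (by linarith : (0:ℝ) ≤ x3 - 1) (by linarith : (0:ℝ) ≤ x6 - 1)),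
    mul_nonneg ht (by linarith : (0:ℝ) ≤ 3 - x4),
    mul_nonneg (mul_nonneg ht ht) (by linarith : (0:ℝ) ≤ 3 - x4),
    mul_nonneg ht (by linarith : (0:ℝ) ≤ 1/5 - t)]

lemma phi_aux3 (t P : ℝ) (ht : 0 ≤ t) (hP : 0 ≤ P) :
    (1 - 10 * t) * (P * (1 + 3 * t) ^ 2) ≤ P * (1 - 2 * t) := by
  nlinarith [mul_nonneg (mul_nonneg hP ht) (sq_nonneg t), mul_nonneg (mul_nonneg hP ht) ht,
    mul_nonneg hP ht]

/-- The cosine of the dihedral angle at the edge `e₁` of a generalized hyper-ideal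
tetrahedron whose edge lengths `lᵢ` satisfy `cosh lᵢ = xᵢ`. -/
noncomputable def phi (x1 x2 x3 x4 x5 x6 : ℝ) : ℝ :=
  (x2 * x3 + x5 * x6 + x1 * x2 * x5 + x1 * x3 * x6 - x1 ^ 2 * x4 + x4) /
    (Real.sqrt (2 * x1 * x2 * x6 + x1 ^ 2 + x2 ^ 2 + x6 ^ 2 - 1) *
      Real.sqrt (2 * x1 * x3 * x5 + x1 ^ 2 + x3 ^ 2 + x5 ^ 2 - 1))

theorem phi_near_one_quantitative (ε : ℝ) (hε : 0 < ε) (hεπ : ε < Real.pi) :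
    ∀ x1 x2 x3 x4 x5 x6 : ℝ,
      1 ≤ x1 → 1 ≤ x2 → 1 ≤ x3 → 1 ≤ x4 → 1 ≤ x5 → 1 ≤ x6 →
      x2 ≤ 3 → x3 ≤ 3 → x4 ≤ 3 → x5 ≤ 3 → x6 ≤ 3 →
      x1 ≤ 1 + ε ^ 2 / (5 * Real.pi ^ 2) →
      Real.cos ε ≤ phi x1 x2 x3 x4 x5 x6 := by
  intro x1 x2 x3 x4 x5 x6 h1 h2 h3 h4 h5 h6 b2 b3 b4 b5 b6 hx1
  have hπ : 0 < Real.pi := Real.pi_pos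
  have hcos : Real.cos ε ≤ 1 - 2 / Real.pi ^ 2 * ε ^ 2 := by
    apply Real.cos_le_one_sub_mul_cos_sq
    rw [abs_of_pos hε]; exact hεπ.le
  set t : ℝ := x1 - 1 with ht
  have ht0 : 0 ≤ t := by simp only [ht]; linarith
  have htδ : t ≤ ε ^ 2 / (5 * Real.pi ^ 2) := by simp only [ht]; linarith
  have hδ5 : ε ^ 2 / (5 * Real.pi ^ 2) < 1 / 5 := by
    rw [div_lt_div_iff₀ (by positivity) (by norm_num)]
    nlinarith
  have ht5 : t < 1 / 5 := lt_of_le_of_lt htδ hδ5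
  have hcos2 : Real.cos ε ≤ 1 - 10 * t := by
    have h10 : 10 * t ≤ 2 / Real.pi ^ 2 * ε ^ 2 := by
      have h := mul_le_mul_of_nonneg_left htδ (by norm_num : (0:ℝ) ≤ 10)
      calc 10 * t ≤ 10 * (ε ^ 2 / (5 * Real.pi ^ 2)) := h
        _ = 2 / Real.pi ^ 2 * ε ^ 2 := by field_simp; ring
    linarith
  have hx11 : x1 = 1 + t := by simp [ht]
  set A : ℝ := 2 * x1 * x2 * x6 + x1 ^ 2 + x2 ^ 2 + x6 ^ 2 - 1 with hA
  set B : ℝ := 2 * x1 * x3 * x5 + x1 ^ 2 + x3 ^ 2 + x5 ^ 2 - 1 with hB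
  set N : ℝ := x2 * x3 + x5 * x6 + x1 * x2 * x5 + x1 * x3 * x6 - x1 ^ 2 * x4 + x4 with hN
  have hAle : A ≤ ((x2 + x6) * (1 + 3 * t)) ^ 2 := by
    rw [hA, hx11]; have := phi_aux1 t x2 x6 ht0 h2 b2 h6 b6; linarith [this]
  have hBle : B ≤ ((x3 + x5) * (1 + 3 * t)) ^ 2 := by
    rw [hB, hx11]; have := phi_aux1 t x3 x5 ht0 h3 b3 h5 b5; linarith [this]
  have hA4 : (4:ℝ) ≤ A := by
    rw [hA, hx11]
    nlinarith [mul_nonneg ht0 (mul_nonneg (by linarith : (0:ℝ) ≤ x2) (by linarith : (0:ℝ) ≤ x6)),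
      mul_nonneg (by linarith : (0:ℝ) ≤ x2 - 1) (by linarith : (0:ℝ) ≤ x6 - 1), sq_nonneg t]
  have hB4 : (4:ℝ) ≤ B := by
    rw [hB, hx11]
    nlinarith [mul_nonneg ht0 (mul_nonneg (by linarith : (0:ℝ) ≤ x3) (by linarith : (0:ℝ) ≤ x5)),
      mul_nonneg (by linarith : (0:ℝ) ≤ x3 - 1) (by linarith : (0:ℝ) ≤ x5 - 1), sq_nonneg t]
  have hApos : (0:ℝ) < A := by linarith
  have hBpos : (0:ℝ) < B := by linarith
  have hsA : Real.sqrt A ≤ (x2 + x6) * (1 + 3 * t) := by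
    have h := Real.sqrt_le_sqrt hAle
    rwa [Real.sqrt_sq (by nlinarith)] at h
  have hsB : Real.sqrt B ≤ (x3 + x5) * (1 + 3 * t) := by
    have h := Real.sqrt_le_sqrt hBle
    rwa [Real.sqrt_sq (by nlinarith)] at h
  have hsApos : 0 < Real.sqrt A := Real.sqrt_pos.mpr hApos
  have hsBpos : 0 < Real.sqrt B := Real.sqrt_pos.mpr hBpos
  have hNlb : (x2 + x6) * (x3 + x5) * (1 - 2 * t) ≤ N := by
    rw [hN, hx11]
    have := phi_aux2 t x2 x3 x4 x5 x6 ht0 ht5.le h2 h3 h4 h5 h6 b4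
    linarith [this]
  have hN0 : 0 ≤ N := by
    refine le_trans ?_ hNlb
    have h2t : (0:ℝ) ≤ 1 - 2 * t := by linarith
    positivity
  have hD : 0 < Real.sqrt A * Real.sqrt B := mul_pos hsApos hsBpos
  rw [phi, ← hA, ← hB, ← hN, le_div_iff₀ hD]
  by_cases h10 : 1 - 10 * t < 0
  · have hcn : Real.cos ε < 0 := lt_of_le_of_lt hcos2 h10
    nlinarith
  · push_neg at h10
    have hDub : Real.sqrt A * Real.sqrt B ≤ (x2 + x6) * (x3 + x5) * (1 + 3 * t) ^ 2 := by
      have e1 : Real.sqrt A * Real.sqrt B ≤ ((x2 + x6) * (1 + 3 * t)) * Real.sqrt B :=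
        mul_le_mul_of_nonneg_right hsA hsBpos.le
      have e2 : ((x2 + x6) * (1 + 3 * t)) * Real.sqrt B ≤
          ((x2 + x6) * (1 + 3 * t)) * ((x3 + x5) * (1 + 3 * t)) :=
        mul_le_mul_of_nonneg_left hsB (mul_nonneg (by linarith) (by linarith))
      have e3 : ((x2 + x6) * (1 + 3 * t)) * ((x3 + x5) * (1 + 3 * t)) =
          (x2 + x6) * (x3 + x5) * (1 + 3 * t) ^ 2 := by ring
      linarith
    have step1 : Real.cos ε * (Real.sqrt A * Real.sqrt B) ≤
        (1 - 10 * t) * ((x2 + x6) * (x3 + x5) * (1 + 3 * t) ^ 2) :=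
      calc Real.cos ε * (Real.sqrt A * Real.sqrt B)
            ≤ (1 - 10 * t) * (Real.sqrt A * Real.sqrt B) :=
            mul_le_mul_of_nonneg_right hcos2 hD.le
        _ ≤ (1 - 10 * t) * ((x2 + x6) * (x3 + x5) * (1 + 3 * t) ^ 2) :=
            mul_le_mul_of_nonneg_left hDub h10
    refine step1.trans (le_trans ?_ hNlb)
    have hP : (0:ℝ) ≤ (x2 + x6) * (x3 + x5) := by positivity
    have := phi_aux3 t ((x2 + x6) * (x3 + x5)) ht0 hP
    linarith [this]
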